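/- Let D ⊂ ℝⁿ be a domain with 0 ∈ ∂D satisfying the cone property (*), and suppose pseudodistances d_{t_k D} on t_k·D and d_{C_D(0)} on C_D(0) are given such that (continuity) d_{t_k D}(x,y) → d_{C_D(0)}(x,y) for all x,y ∈ C_D(0), and (invariance) d_{t_k D}(t_k x, t_k y) defines the same four-point quantity: S_{t_k D}(t_k x, t_k y, t_k z, t_k w) = S_D(x,y,z,w) for all x,y,z,w ∈ D. If the Gromov product defect S_{C_D(0)} := sup over quadruples of [d(x,z)+d(y,w) − max{d(x,y)+d(z,w), d(y,z)+d(x,w)}] is infinite (i.e. (C_D(0), d_{C_D(0)}) is non-Gromov hyperbolic), then S_D = ∞, i.e. (D, d_D) is non-Gromov hyperbolic. -/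
import Mathlib


open Set Filter Pointwise

/-- The four-point Gromov quantity associated to a (pseudo)distance `d`. -/
def Sq {α : Type*} (d : α → α → ℝ) (x y z w : α) : ℝ :=
  d x z + d y w - max (d x y + d z w) (d y z + d x w)

/-- `d` is a pseudodistance on the set `X`. -/
def IsPseudodist {α : Type*} (X : Set α) (d : α → α → ℝ) : Prop :=
  (∀ x ∈ X, ∀ y ∈ X, 0 ≤ d x y) ∧ (∀ x ∈ X, d x x = 0) ∧
  (∀ x ∈ X, ∀ y ∈ X, d x y = d y x) ∧
  (∀ x ∈ X, ∀ y ∈ X, ∀ z ∈ X, d x z ≤ d x y + d y z)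

def coneAt {n : ℕ} (D : Set (Fin n → ℝ)) (x : Fin n → ℝ) : Set (Fin n → ℝ) :=
  {v | ∃ ε > (0:ℝ), ∃ U ∈ nhds v, ∀ w ∈ U, ∀ t ∈ Set.Ioo (0:ℝ) ε, x + t • w ∈ D}

lemma cone_ray {n : ℕ} {D : Set (Fin n → ℝ)} {v : Fin n → ℝ} (hv : v ∈ coneAt D 0) :
    ∃ ε > (0:ℝ), ∀ s ∈ Set.Ioo (0:ℝ) ε, s • v ∈ D := by
  obtain ⟨ε, hε, U, hU, h⟩ := hv
  exact ⟨ε, hε, fun s hs => by simpa using h v (mem_of_mem_nhds hU) s hs⟩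

theorem stmt_3 {n : ℕ} (D : Set (Fin n → ℝ)) (hDopen : IsOpen D)
    (h0 : (0 : Fin n → ℝ) ∈ frontier D)
    -- property (*) at 0 :
    (hstar : ∀ v : Fin n → ℝ, (∀ s : ℝ, 0 ≤ s → s • v ∉ D) ∨ v ∈ coneAt D 0)
    (t : ℕ → ℝ) (htpos : ∀ k, 0 < t k) (hmono : Monotone t)
    (htop : Tendsto t atTop atTop)
    (dD : (Fin n → ℝ) → (Fin n → ℝ) → ℝ)
    (dk : ℕ → (Fin n → ℝ) → (Fin n → ℝ) → ℝ)
    (dC : (Fin n → ℝ) → (Fin n → ℝ) → ℝ)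
    (hdD : IsPseudodist D dD)
    (hdk : ∀ k, IsPseudodist (t k • D) (dk k))
    (hdC : IsPseudodist (coneAt D 0) dC)
    -- continuity property :
    (hcont : ∀ x ∈ coneAt D 0, ∀ y ∈ coneAt D 0,
      Tendsto (fun k => dk k x y) atTop (nhds (dC x y)))
    -- invariance property (for the four-point quantity) :
    (hinv : ∀ k, ∀ x ∈ D, ∀ y ∈ D, ∀ z ∈ D, ∀ w ∈ D,
      Sq (dk k) (t k • x) (t k • y) (t k • z) (t k • w) = Sq dD x y z w)
    -- non-Gromov hyperbolicity of the cone :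
    (hC : ∀ M : ℝ, ∃ x ∈ coneAt D 0, ∃ y ∈ coneAt D 0, ∃ z ∈ coneAt D 0,
      ∃ w ∈ coneAt D 0, M < Sq dC x y z w) :
    ∀ M : ℝ, ∃ x ∈ D, ∃ y ∈ D, ∃ z ∈ D, ∃ w ∈ D, M < Sq dD x y z w := by
  intro M
  obtain ⟨x, hx, y, hy, z, hz, w, hw, hM⟩ := hC M
  obtain ⟨ex, hex, hrx⟩ := cone_ray hx
  obtain ⟨ey, hey, hry⟩ := cone_ray hy
  obtain ⟨ez, hez, hrz⟩ := cone_ray hz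
  obtain ⟨ew, hew, hrw⟩ := cone_ray hw
  set ε := min (min ex ey) (min ez ew) with hεdef
  have hε : 0 < ε := by positivity
  -- Sq (dk k) x y z w tends to Sq dC x y z w
  have htend : Tendsto (fun k => Sq (dk k) x y z w) atTop (nhds (Sq dC x y z w)) := by
    unfold Sq
    exact (((hcont x hx z hz).add (hcont y hy w hw)).sub
      (((hcont x hx y hy).add (hcont z hz w hw)).max
        ((hcont y hy z hz).add (hcont x hx w hw))))
  have h1 : ∀ᶠ k in atTop, M < Sq (dk k) x y z w :=
    htend.eventually (eventually_gt_nhds hM)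
  have h2 : ∀ᶠ k in atTop, ε⁻¹ < t k := htop.eventually_gt_atTop _
  obtain ⟨k, hk1, hk2⟩ := (h1.and h2).exists
  have htk := htpos k
  have hs : (t k)⁻¹ ∈ Set.Ioo (0:ℝ) ε := by
    constructor
    · positivity
    · rw [← inv_inv ε]
      exact inv_strictAnti₀ (by positivity) hk2
  have hsx : (t k)⁻¹ • x ∈ D := hrx _ ⟨hs.1, lt_of_lt_of_le hs.2 (by simp [hεdef])⟩
  have hsy : (t k)⁻¹ • y ∈ D := hry _ ⟨hs.1, lt_of_lt_of_le hs.2 (by simp [hεdef])⟩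
  have hsz : (t k)⁻¹ • z ∈ D := hrz _ ⟨hs.1, lt_of_lt_of_le hs.2 (by simp [hεdef])⟩
  have hsw : (t k)⁻¹ • w ∈ D := hrw _ ⟨hs.1, lt_of_lt_of_le hs.2 (by simp [hεdef])⟩
  refine ⟨_, hsx, _, hsy, _, hsz, _, hsw, ?_⟩
  have := hinv k _ hsx _ hsy _ hsz _ hsw
  rw [smul_inv_smul₀ htk.ne', smul_inv_smul₀ htk.ne', smul_inv_smul₀ htk.ne',
    smul_inv_smul₀ htk.ne'] at this
  rw [← this]
  exact hk1
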